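/- Let G be a group and τ : I → G define an elementary grading on the finitary matrix algebra R. Then for any g ∈ G, g ∈ Supp(R) if and only if g⁻¹ ∈ Supp(R). Moreover, the identity component R^(e) equals the direct sum over g ∈ im(τ) of the simple ideals M^(g) = span{E_{ij} : τ(i) = τ(j) = g}. -/
import Mathlib

section Finitary

variable (F : Type*) [Field F] (ι : Type*) [DecidableEq ι]

/-- The matrix unit `E i j` inside `End(ι →₀ F)`. -/
noncomputable def Eij (i j : ι) : Module.End F (ι →₀ F) :=
  (Finsupp.lsingle i).comp (Finsupp.lapply j)

/-- The elementary grading component of degree `g` on the finitary matrix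
algebra defined by `τ`. -/
noncomputable def finElemComp {G : Type*} [Group G] (τ : ι → G) (g : G) :
    Submodule F (Module.End F (ι →₀ F)) :=
  Submodule.span F {f | ∃ i j : ι, (τ i)⁻¹ * τ j = g ∧ f = Eij F ι i j}

/-- The ideal `M^(g)` of the identity component: the span of the matrix units
`E i j` with `τ(i) = τ(j) = g`. -/
noncomputable def idComp {G : Type*} [Group G] (τ : ι → G) (g : G) :
    Submodule F (Module.End F (ι →₀ F)) :=
  Submodule.span F {f | ∃ i j : ι, τ i = g ∧ τ j = g ∧ f = Eij F ι i j}

end Finitary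

section Aux

variable (F : Type*) [Field F] (ι : Type*) [DecidableEq ι]

set_option linter.unusedSectionVars false

lemma Eij_apply (i j : ι) (x : ι →₀ F) : Eij F ι i j x = Finsupp.single i (x j) := rfl

lemma Eij_mul (i j k l : ι) :
    Eij F ι i j * Eij F ι k l = if j = k then Eij F ι i l else 0 := by
  apply LinearMap.ext; intro x
  rw [Module.End.mul_apply, Eij_apply, Eij_apply, Finsupp.single_apply]
  by_cases h : j = k
  · rw [if_pos h, if_pos h.symm, Eij_apply]
  · rw [if_neg h, if_neg (fun hh => h hh.symm)]
    simp

lemma Eij_ne_zero (i j : ι) : Eij F ι i j ≠ 0 := by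
  intro h
  have h2 := congrArg (fun f : Module.End F (ι →₀ F) => f (Finsupp.single j 1) i) h
  simp [Eij_apply, Finsupp.single_eq_same] at h2

/-- The family of matrix units indexed by pairs. -/
noncomputable def vv : ι × ι → Module.End F (ι →₀ F) := fun p => Eij F ι p.1 p.2

noncomputable def coeffMap (p : ι × ι) : Module.End F (ι →₀ F) →ₗ[F] F :=
  (Finsupp.lapply p.1).comp (LinearMap.applyₗ (Finsupp.single p.2 (1 : F)))

lemma coeffMap_vv (p q : ι × ι) : coeffMap F ι p (vv F ι q) = if q = p then 1 else 0 := by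
  show (Eij F ι q.1 q.2) (Finsupp.single p.2 1) p.1 = _
  rw [Eij_apply, Finsupp.single_apply, Finsupp.single_apply]
  by_cases hq : q = p
  · subst hq; simp
  · rw [if_neg hq]
    by_cases h1 : q.1 = p.1
    · have h2 : ¬ p.2 = q.2 := fun hh => hq (Prod.ext h1 hh.symm)
      simp [h1, h2]
    · simp [h1]


lemma sandwich (l : (ι × ι) →₀ F) (i a b j : ι) :
    Eij F ι i a * (Finsupp.linearCombination F (vv F ι) l) * Eij F ι b j
      = l (a, b) • Eij F ι i j := by
  rw [Finsupp.linearCombination_apply, Finsupp.sum, Finset.mul_sum, Finset.sum_mul]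
  have hterm : ∀ q ∈ l.support, (Eij F ι i a * (l q • vv F ι q)) * Eij F ι b j
      = if q = (a, b) then l q • Eij F ι i j else 0 := by
    rintro ⟨c, d⟩ _
    rw [mul_smul_comm, smul_mul_assoc]
    show (l (c, d)) • (Eij F ι i a * Eij F ι c d * Eij F ι b j) = _
    rw [Eij_mul]
    by_cases h1 : a = c
    · rw [if_pos h1, Eij_mul]
      by_cases h2 : d = b
      · rw [if_pos h2, if_pos (by rw [Prod.ext_iff]; exact ⟨h1.symm, h2⟩)]
      · rw [if_neg h2, smul_zero,
          if_neg (fun hh => h2 (congrArg Prod.snd hh)), ]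
    · rw [if_neg h1, zero_mul, smul_zero,
        if_neg (fun hh => h1 (congrArg Prod.fst hh).symm)]
  rw [Finset.sum_congr rfl hterm, Finset.sum_ite_eq' l.support (a, b)]
  split_ifs with h
  · rfl
  · rw [Finsupp.notMem_support_iff.mp h, zero_smul]

variable {G : Type*} [Group G] (τ : ι → G)

lemma idComp_eq_span (g : G) :
    idComp F ι τ g
      = Submodule.span F (vv F ι '' {p : ι × ι | τ p.1 = g ∧ τ p.2 = g}) := by
  unfold idComp
  congr 1
  ext f
  constructor
  · rintro ⟨i, j, hi, hj, rfl⟩; exact ⟨(i, j), ⟨hi, hj⟩, rfl⟩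
  · rintro ⟨⟨i, j⟩, ⟨hi, hj⟩, rfl⟩; exact ⟨i, j, hi, hj, rfl⟩

end Aux
section Aux2
variable (F : Type*) [Field F] (ι : Type*) [DecidableEq ι]
set_option linter.unusedSectionVars false

lemma coeff_lc (l : (ι × ι) →₀ F) (p : ι × ι) :
    coeffMap F ι p (Finsupp.linearCombination F (vv F ι) l) = l p := by
  rw [Finsupp.linearCombination_apply, map_finsuppSum]
  simp only [map_smul, coeffMap_vv, smul_eq_mul, mul_ite, mul_one, mul_zero]
  rw [Finsupp.sum_ite_eq' l p (fun _ c => c)]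
  split_ifs with hs
  · rfl
  · exact (Finsupp.notMem_support_iff.mp hs).symm

lemma disjoint_span_vv (A B : Set (ι × ι)) (hAB : Disjoint A B) :
    Disjoint (Submodule.span F (vv F ι '' A)) (Submodule.span F (vv F ι '' B)) := by
  rw [Submodule.disjoint_def]
  intro x hxA hxB
  rw [Finsupp.mem_span_image_iff_linearCombination] at hxA hxB
  obtain ⟨l, hlA, hlx⟩ := hxA
  obtain ⟨m, hmB, hmx⟩ := hxB
  have hlm : l = m := by
    ext p
    rw [← coeff_lc F ι l p, ← coeff_lc F ι m p, hlx, hmx]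
  have hl0 : l = 0 := by
    ext p
    by_contra hp
    have hpA : p ∈ A := (Finsupp.mem_supported F l).mp hlA (Finsupp.mem_support_iff.mpr hp)
    have hpB : p ∈ B := (Finsupp.mem_supported F m).mp hmB
      (Finsupp.mem_support_iff.mpr (hlm ▸ hp))
    exact Set.disjoint_left.mp hAB hpA hpB
  rw [← hlx, hl0, map_zero]

variable {G : Type*} [Group G] (τ : ι → G)

lemma part3 : iSupIndep (fun g : Set.range τ => idComp F ι τ (g : G)) := by
  intro g₀
  have hli := disjoint_span_vv F ι
    {p : ι × ι | τ p.1 = (g₀ : G) ∧ τ p.2 = (g₀ : G)}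
    {p : ι × ι | ¬(τ p.1 = (g₀ : G) ∧ τ p.2 = (g₀ : G))}
    (Set.disjoint_left.mpr fun p hp hnp => hnp hp)
  refine Disjoint.mono ?_ ?_ hli
  · exact (idComp_eq_span F ι τ (g₀ : G)).le
  · refine iSup_le fun g => iSup_le fun hgne => ?_
    show idComp F ι τ (g : G) ≤ _
    rw [idComp_eq_span]
    refine Submodule.span_mono (Set.image_mono ?_)
    rintro ⟨i, j⟩ ⟨hi, hj⟩ ⟨hi0, _⟩
    exact hgne (Subtype.ext (hi ▸ hi0))
set_option maxHeartbeats 1000000 in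
lemma part4 (g h : G) (hgh : g ≠ h) : idComp F ι τ g * idComp F ι τ h = ⊥ := by
  unfold idComp
  rw [Submodule.span_mul_span, Submodule.span_eq_bot]
  rintro x hx
  rw [Set.mem_mul] at hx
  obtain ⟨a, ha, b, hb, rfl⟩ := hx
  obtain ⟨i, j, hi, hj, rfl⟩ := ha
  obtain ⟨k, l, hk, hl, rfl⟩ := hb
  rw [Eij_mul, if_neg]
  intro hjk
  exact hgh (by rw [← hj, hjk, hk])

set_option maxHeartbeats 1000000 in
lemma part5L (g : G) : finElemComp F ι τ 1 * idComp F ι τ g ≤ idComp F ι τ g := by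
  unfold idComp finElemComp
  rw [Submodule.span_mul_span, Submodule.span_le]
  refine Set.mul_subset_iff.mpr ?_
  rintro x ⟨i, j, hij, rfl⟩ y ⟨k, l, hk, hl, rfl⟩
  rw [inv_mul_eq_one] at hij
  rw [Eij_mul]
  by_cases hjk : j = k
  · rw [if_pos hjk]
    exact Submodule.subset_span ⟨i, l, by rw [hij, hjk, hk], hl, rfl⟩
  · rw [if_neg hjk]; exact Submodule.zero_mem _

set_option maxHeartbeats 1000000 in
lemma part5R (g : G) : idComp F ι τ g * finElemComp F ι τ 1 ≤ idComp F ι τ g := by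
  unfold idComp finElemComp
  rw [Submodule.span_mul_span, Submodule.span_le]
  refine Set.mul_subset_iff.mpr ?_
  rintro x ⟨i, j, hi, hj, rfl⟩ y ⟨k, l, hkl, rfl⟩
  rw [inv_mul_eq_one] at hkl
  rw [Eij_mul]
  by_cases hjk : j = k
  · rw [if_pos hjk]
    exact Submodule.subset_span ⟨i, l, hi, by rw [← hkl, ← hjk, hj], rfl⟩
  · rw [if_neg hjk]; exact Submodule.zero_mem _

set_option maxHeartbeats 1000000 in
lemma part6 (g : G) (J : Submodule F (Module.End F (ι →₀ F)))
    (hJle : J ≤ idComp F ι τ g)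
    (hmulL : idComp F ι τ g * J ≤ J) (hmulR : J * idComp F ι τ g ≤ J) :
    J = ⊥ ∨ J = idComp F ι τ g := by
  by_cases hJ : J = ⊥
  · exact Or.inl hJ
  right
  obtain ⟨x, hxJ, hx0⟩ := Submodule.exists_mem_ne_zero_of_ne_bot hJ
  have hx : x ∈ Submodule.span F
      (vv F ι '' {p : ι × ι | τ p.1 = g ∧ τ p.2 = g}) := by
    rw [← idComp_eq_span]; exact hJle hxJ
  rw [Finsupp.mem_span_image_iff_linearCombination] at hx
  obtain ⟨l, hlsupp, hlx⟩ := hx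
  have hl0 : l ≠ 0 := by
    rintro rfl
    exact hx0 (by rw [← hlx, map_zero])
  obtain ⟨p0, hp0⟩ := Finsupp.support_nonempty_iff.mpr hl0
  have hp0S : τ p0.1 = g ∧ τ p0.2 = g :=
    (Finsupp.mem_supported F l).mp hlsupp hp0
  have hlp0 : l p0 ≠ 0 := Finsupp.mem_support_iff.mp hp0
  refine le_antisymm hJle (Submodule.span_le.mpr ?_)
  rintro f ⟨i, j, hi, hj, rfl⟩
  have hkey : Eij F ι i p0.1 * x * Eij F ι p0.2 j = l p0 • Eij F ι i j := by
    rw [← hlx]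
    exact sandwich F ι l i p0.1 p0.2 j
  have hmem1 : Eij F ι i p0.1 * x ∈ J :=
    hmulL (Submodule.mul_mem_mul
      (Submodule.subset_span ⟨i, p0.1, hi, hp0S.1, rfl⟩) hxJ)
  have hmem2 : Eij F ι i p0.1 * x * Eij F ι p0.2 j ∈ J :=
    hmulR (Submodule.mul_mem_mul hmem1
      (Submodule.subset_span ⟨p0.2, j, hp0S.2, hj, rfl⟩))
  rw [hkey] at hmem2
  have hsm := J.smul_mem (l p0)⁻¹ hmem2
  rwa [smul_smul, inv_mul_cancel₀ hlp0, one_smul] at hsm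

end Aux2
set_option maxHeartbeats 1000000 in
/-- for the elementary grading defined by `τ : I → G` on the
finitary matrix algebra `R`: `g ∈ Supp R ↔ g⁻¹ ∈ Supp R`, and the identity
component `R^(e)` is the direct sum of the simple (i.e. no proper nonzero
ideals) ideals `M^(g) = span{E_ij : τ(i) = τ(j) = g}`, `g ∈ im τ`. -/
theorem identity_component_structure
    (F : Type*) [Field F] (ι : Type*) [DecidableEq ι]
    (G : Type*) [Group G] (τ : ι → G) :
    (∀ g : G, finElemComp F ι τ g ≠ ⊥ ↔ finElemComp F ι τ g⁻¹ ≠ ⊥) ∧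
    finElemComp F ι τ 1 = (⨆ g ∈ Set.range τ, idComp F ι τ g) ∧
    iSupIndep (fun g : Set.range τ => idComp F ι τ (g : G)) ∧
    (∀ g ∈ Set.range τ, ∀ h ∈ Set.range τ, g ≠ h →
      idComp F ι τ g * idComp F ι τ h = ⊥) ∧
    (∀ g ∈ Set.range τ,
      finElemComp F ι τ 1 * idComp F ι τ g ≤ idComp F ι τ g ∧
      idComp F ι τ g * finElemComp F ι τ 1 ≤ idComp F ι τ g) ∧
    (∀ g ∈ Set.range τ, ∀ J : Submodule F (Module.End F (ι →₀ F)),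
      J ≤ idComp F ι τ g →
      idComp F ι τ g * J ≤ J → J * idComp F ι τ g ≤ J →
      J = ⊥ ∨ J = idComp F ι τ g) := by
  have hne : ∀ g : G, finElemComp F ι τ g ≠ ⊥ ↔ ∃ i j : ι, (τ i)⁻¹ * τ j = g := by
    intro g
    constructor
    · intro hbot
      by_contra hno
      refine hbot (Submodule.span_eq_bot.mpr ?_)
      rintro x ⟨i, j, hij, rfl⟩
      exact absurd ⟨i, j, hij⟩ hno
    · rintro ⟨i, j, hij⟩ hbot
      have hmem : Eij F ι i j ∈ finElemComp F ι τ g :=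
        Submodule.subset_span ⟨i, j, hij, rfl⟩
      rw [hbot, Submodule.mem_bot] at hmem
      exact Eij_ne_zero F ι i j hmem
  refine ⟨?_, ?_, part3 F ι τ, fun g _ h _ hgh => part4 F ι τ g h hgh,
    fun g _ => ⟨part5L F ι τ g, part5R F ι τ g⟩,
    fun g _ J h1 h2 h3 => part6 F ι τ g J h1 h2 h3⟩
  -- Part 1
  · intro g
    rw [hne, hne]
    constructor
    · rintro ⟨i, j, hij⟩
      exact ⟨j, i, by rw [← hij]; group⟩
    · rintro ⟨i, j, hij⟩
      exact ⟨j, i, by rw [← inv_inv g, ← hij]; group⟩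
  -- Part 2
  · have hset : {f | ∃ i j : ι, (τ i)⁻¹ * τ j = 1 ∧ f = Eij F ι i j}
        = ⋃ g ∈ Set.range τ,
            {f | ∃ i j : ι, τ i = g ∧ τ j = g ∧ f = Eij F ι i j} := by
      ext f
      simp only [Set.mem_setOf_eq, Set.mem_iUnion]
      constructor
      · rintro ⟨i, j, hij, rfl⟩
        rw [inv_mul_eq_one] at hij
        exact ⟨τ i, ⟨i, rfl⟩, i, j, rfl, hij.symm, rfl⟩
      · rintro ⟨g, hg, i, j, hi, hj, rfl⟩
        exact ⟨i, j, by rw [hi, hj, inv_mul_cancel], rfl⟩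
    show Submodule.span F _ = _
    rw [hset, Submodule.span_iUnion₂]
    rfl
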